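/- arXiv:math/0108178 — 4 statements merged into one kernel-verified Lean document; each statement's English description precedes it below -/
import Mathlib

section
/- For all real r > 0, ∫₀^∞ cos(ru) / cosh⁴(u/2) du = 4πr(r² + 1)/(3 sinh(πr)). -/
open Real MeasureTheory
open Complex Set

noncomputable def φ : ℝ → ℝ := fun u => (1 + Real.exp u)⁻¹

lemma phi_mem (u : ℝ) : φ u ∈ Ioo (0:ℝ) 1 := by
  have hE : 0 < Real.exp u := Real.exp_pos u
  constructor
  · rw [φ]; positivity
  · rw [φ, inv_lt_one_iff₀]; right; linarith

lemma phi_image : φ '' Set.univ = Ioo (0:ℝ) 1 := by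
  apply Set.Subset.antisymm
  · rintro x ⟨u, -, rfl⟩; exact phi_mem u
  · rintro x ⟨hx0, hx1⟩
    refine ⟨Real.log (x⁻¹ - 1), trivial, ?_⟩
    have h1 : 1 < x⁻¹ := (one_lt_inv_iff₀).mpr ⟨hx0, hx1⟩
    rw [φ, Real.exp_log (by linarith)]
    field_simp
    ring

lemma phi_inj : Set.InjOn φ Set.univ := by
  have : StrictAnti φ := by
    intro a b hab
    have : (1:ℝ) + Real.exp a < 1 + Real.exp b := by
      have := Real.exp_lt_exp.2 hab; linarith
    exact inv_strictAnti₀ (by positivity) this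
  exact this.injective.injOn

lemma phi_deriv (u : ℝ) :
    HasDerivAt φ (-(Real.exp u / (1 + Real.exp u) ^ 2)) u := by
  have h : HasDerivAt (fun u : ℝ => 1 + Real.exp u) (Real.exp u) u :=
    (Real.hasDerivAt_exp u).const_add 1
  have h2 := h.inv (by positivity : (1:ℝ) + Real.exp u ≠ 0)
  rw [show -(Real.exp u / (1 + Real.exp u) ^ 2) = -Real.exp u / (1 + Real.exp u)^2 by ring]
  exact h2


lemma cosh_pow4 (u : ℝ) :
    Real.cosh (u/2) ^ 4 = (1 + Real.exp u)^4 / (16 * Real.exp u ^ 2) := by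
  have hs2 : Real.exp (u/2) * Real.exp (u/2) = Real.exp u := by
    rw [← Real.exp_add]; norm_num
  have hsne : Real.exp (u/2) ≠ 0 := (Real.exp_pos _).ne'
  rw [Real.cosh_eq, Real.exp_neg, ← hs2]
  field_simp
  ring

lemma pointwise (r u : ℝ) :
    |(-(Real.exp u / (1 + Real.exp u) ^ 2))| •
      (((φ u : ℝ):ℂ)^((2:ℂ) - Complex.I*r - 1) * ((1:ℂ) - (φ u : ℝ))^((2:ℂ) + Complex.I*r - 1))
    = (1/16 : ℂ) * (Complex.exp (Complex.I*r*u) / (Real.cosh (u/2) : ℂ)^4) := by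
  obtain ⟨hx0, hx1⟩ := phi_mem u
  set x := φ u with hxdef
  have hE : 0 < Real.exp u := Real.exp_pos u
  have h1x : 1 - x = Real.exp u / (1 + Real.exp u) := by
    rw [hxdef, φ]; field_simp; ring
  have hxe : x = (1 + Real.exp u)⁻¹ := rfl
  have hprod : x * (1 - x) = Real.exp u / (1 + Real.exp u)^2 := by
    rw [h1x, hxe]; field_simp
  have hlog : Real.log (1 - x) - Real.log x = u := by
    rw [← Real.log_div (by linarith) (by positivity)]
    rw [show (1-x)/x = Real.exp u by rw [h1x, hxe]; field_simp]
    exact Real.log_exp u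
  have habs : |(-(Real.exp u / (1 + Real.exp u) ^ 2))| = x * (1 - x) := by
    rw [abs_neg, abs_of_pos (by positivity), hprod]
  have hcosh : (0:ℝ) < Real.cosh (u/2) := Real.cosh_pos _
  have hreal : (x * (1 - x))^2 * (16 * Real.cosh (u/2)^4) = 1 := by
    rw [hprod, cosh_pow4]
    have : (0:ℝ) < 1 + Real.exp u := by positivity
    field_simp
  -- cpow expansion
  have hxC : ((x:ℝ):ℂ) ≠ 0 := by exact_mod_cast hx0.ne'
  have h1xC : ((1:ℂ) - (x:ℝ)) = ((1 - x : ℝ) : ℂ) := by push_cast; ring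
  have h1xCne : ((1 - x : ℝ):ℂ) ≠ 0 := by
    simp only [ne_eq, Complex.ofReal_eq_zero]; linarith
  rw [h1xC, Complex.cpow_def_of_ne_zero hxC, Complex.cpow_def_of_ne_zero h1xCne,
    ← Complex.ofReal_log hx0.le, ← Complex.ofReal_log (by linarith : (0:ℝ) ≤ 1 - x),
    ← Complex.exp_add]
  have hexpo : (Real.log x : ℂ) * ((2:ℂ) - Complex.I*r - 1) + (Real.log (1-x) : ℂ) * ((2:ℂ) + Complex.I*r - 1)
      = ((Real.log x + Real.log (1-x) : ℝ) : ℂ) + Complex.I*r*((Real.log (1-x) - Real.log x : ℝ):ℂ) := by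
    push_cast; ring
  rw [hexpo, hlog, Complex.exp_add,
    show Real.log x + Real.log (1-x) = Real.log (x*(1-x)) from (Real.log_mul hx0.ne' (by linarith)).symm,
    ← Complex.ofReal_exp, Real.exp_log (mul_pos hx0 (by linarith) : (0:ℝ) < x*(1-x)), habs,
    Complex.real_smul]
  have hc4 : ((Real.cosh (u/2) : ℝ):ℂ)^4 ≠ 0 := by
    exact_mod_cast pow_ne_zero 4 (by exact_mod_cast hcosh.ne' : ((Real.cosh (u/2):ℝ):ℂ) ≠ 0)
  have hrealC : ((x*(1-x):ℝ):ℂ)^2 * (16 * ((Real.cosh (u/2) : ℝ):ℂ)^4) = 1 := by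
    exact_mod_cast congrArg (fun t : ℝ => (t:ℂ)) hreal
  rw [show (1/16:ℂ) * (Complex.exp (Complex.I*r*u) / ((Real.cosh (u/2):ℝ):ℂ)^4)
      = Complex.exp (Complex.I*r*u) / (16 * ((Real.cosh (u/2):ℝ):ℂ)^4) by ring,
    eq_div_iff (by exact mul_ne_zero (by norm_num) hc4)]
  linear_combination Complex.exp (Complex.I*r*u) * hrealC

lemma beta_eq (r : ℝ) :
    Complex.betaIntegral (2 - Complex.I*r) (2 + Complex.I*r)
      = (1/16:ℂ) * ∫ u : ℝ, Complex.exp (Complex.I*r*u) / (Real.cosh (u/2):ℂ)^4 := by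
  rw [Complex.betaIntegral, intervalIntegral.integral_of_le zero_le_one,
    MeasureTheory.integral_Ioc_eq_integral_Ioo, ← phi_image,
    integral_image_eq_integral_abs_deriv_smul MeasurableSet.univ
      (fun x _ => (phi_deriv x).hasDerivWithinAt) phi_inj]
  rw [Measure.restrict_univ]
  simp_rw [pointwise r]
  rw [MeasureTheory.integral_const_mul]

lemma exp_abs_integrable : Integrable (fun u : ℝ => Real.exp (-2 * |u|)) := by
  have hIoi : IntegrableOn (fun u : ℝ => Real.exp (-2*|u|)) (Ioi 0) := by
    refine (exp_neg_integrableOn_Ioi 0 (by norm_num : (0:ℝ) < 2)).congr_fun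
      (fun x hx => ?_) measurableSet_Ioi
    rw [abs_of_pos hx]
  have hIic : IntegrableOn (fun u : ℝ => Real.exp (-2*|u|)) (Iic 0) := by
    rw [← Measure.map_neg_eq_self (volume : Measure ℝ)]
    have A : MeasurableEmbedding fun x : ℝ => -x := (Homeomorph.neg ℝ).measurableEmbedding
    rw [A.integrableOn_map_iff]
    simp_rw [Function.comp_def, abs_neg, neg_preimage, neg_Iic, neg_zero]
    exact Iff.mpr integrableOn_Ici_iff_integrableOn_Ioi hIoi
  rw [← integrableOn_univ, ← Set.Iic_union_Ioi (a := (0:ℝ))]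
  exact hIic.union hIoi

lemma cosh_bound (u : ℝ) : Real.exp (2*|u|) / 16 ≤ Real.cosh (u/2)^4 := by
  have h1 : Real.exp (|u|/2) / 2 ≤ Real.cosh (u/2) := by
    rw [← Real.cosh_abs, abs_div, abs_of_pos (by norm_num : (0:ℝ) < 2), Real.cosh_eq]
    have := (Real.exp_pos (-(|u|/2))).le
    linarith
  have h2 : (0:ℝ) < Real.exp (|u|/2) / 2 := by positivity
  have he : (Real.exp (|u|/2)/2)^4 = Real.exp (2*|u|)/16 := by
    have : Real.exp (|u|/2)^4 = Real.exp (2*|u|) := by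
      rw [show (2*|u| : ℝ) = (4:ℕ) * (|u|/2) by push_cast; ring, Real.exp_nat_mul]
    rw [div_pow, this]; norm_num
  calc Real.exp (2*|u|) / 16 = (Real.exp (|u|/2)/2)^4 := he.symm
    _ ≤ Real.cosh (u/2)^4 := pow_le_pow_left₀ h2.le h1 4

lemma F_integrable (r : ℝ) :
    Integrable (fun u : ℝ => Complex.exp (Complex.I*r*u) / (Real.cosh (u/2):ℂ)^4) := by
  have hcont : Continuous (fun u : ℝ => Complex.exp (Complex.I*r*u) / (Real.cosh (u/2):ℂ)^4) := by
    apply Continuous.div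
    · exact Complex.continuous_exp.comp (by continuity)
    · exact (Complex.continuous_ofReal.comp (Real.continuous_cosh.comp
        (continuous_id.div_const 2))).pow 4
    · intro x
      exact pow_ne_zero 4 (Complex.ofReal_ne_zero.mpr (Real.cosh_pos _).ne')
  refine (exp_abs_integrable.const_mul 16).mono' hcont.aestronglyMeasurable ?_
  filter_upwards with u
  have hcosh : (0:ℝ) < Real.cosh (u/2) := Real.cosh_pos _
  have hb := cosh_bound u
  have hre : (Complex.I*(r:ℂ)*(u:ℂ)).re = 0 := by simp
  rw [norm_div, Complex.norm_exp, hre, Real.exp_zero]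
  have hnorm : ‖((Real.cosh (u/2):ℝ):ℂ)^4‖ = Real.cosh (u/2)^4 := by
    rw [norm_pow, Complex.norm_real, Real.norm_eq_abs, abs_of_pos hcosh]
  rw [hnorm]
  have h3 : 1/Real.cosh (u/2)^4 ≤ 1/(Real.exp (2*|u|)/16) :=
    one_div_le_one_div_of_le (by positivity) hb
  have h4 : 1/(Real.exp (2*|u|)/16) = 16 * Real.exp (-2*|u|) := by
    rw [show (-2:ℝ)*|u| = -(2*|u|) by ring, Real.exp_neg]
    field_simp
  rw [one_div] at h3 ⊢
  rw [h4] at h3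
  exact h3

lemma gamma_prod (r : ℝ) (hr : 0 < r) :
    Complex.Gamma (2 - Complex.I * r) * Complex.Gamma (2 + Complex.I * r)
      = (π * r * (r ^ 2 + 1) / Real.sinh (π * r) : ℝ) := by
  have hir : (Complex.I * r) ≠ 0 := by
    simp [Complex.ext_iff, hr.ne']
  have h1 : (1 + Complex.I * r) ≠ 0 := by
    simp [Complex.ext_iff]
  have e1 : Complex.Gamma (2 + Complex.I * r) = (1 + Complex.I * r) * (Complex.I * r) * Complex.Gamma (Complex.I * r) := by
    rw [show (2 : ℂ) + Complex.I * r = 1 + Complex.I * r + 1 by ring,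
      Complex.Gamma_add_one _ h1, show (1 : ℂ) + Complex.I * r = Complex.I * r + 1 by ring,
      Complex.Gamma_add_one _ hir]; ring
  have e2 : Complex.Gamma (2 - Complex.I * r) = (1 - Complex.I * r) * Complex.Gamma (1 - Complex.I * r) := by
    rw [show (2 : ℂ) - Complex.I * r = 1 - Complex.I * r + 1 by ring,
      Complex.Gamma_add_one _ (by simp [Complex.ext_iff])]
  have hrefl := Complex.Gamma_mul_Gamma_one_sub (Complex.I * r)
  have hsin : Complex.sin (π * (Complex.I * r)) = Real.sinh (π * r) * Complex.I := by
    rw [show (π : ℂ) * (Complex.I * r) = ((π * r : ℝ) : ℂ) * Complex.I by push_cast; ring,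
      Complex.sin_mul_I, Complex.ofReal_sinh]
  have hsinh : (Real.sinh (π * r) : ℂ) ≠ 0 := by
    simp only [ne_eq, Complex.ofReal_eq_zero, Real.sinh_eq_zero]
    positivity
  rw [e1, e2]
  have key : Complex.Gamma (Complex.I * r) * Complex.Gamma (1 - Complex.I * r)
      = π / (Real.sinh (π * r) * Complex.I) := by rw [← hsin, hrefl]
  have halg : (1 - Complex.I * r) * (1 + Complex.I * r) * (Complex.I * r)
      = (1 + (r:ℂ)^2) * r * Complex.I := by
    linear_combination (-(r:ℂ)^3 * Complex.I) * Complex.I_sq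
  calc (1 - Complex.I * r) * Complex.Gamma (1 - Complex.I * r) *
        ((1 + Complex.I * r) * (Complex.I * r) * Complex.Gamma (Complex.I * r))
      = (1 - Complex.I * r) * (1 + Complex.I * r) * (Complex.I * r) *
        (Complex.Gamma (Complex.I * r) * Complex.Gamma (1 - Complex.I * r)) := by ring
    _ = (1 + (r:ℂ)^2) * r * Complex.I * (π / (Real.sinh (π * r) * Complex.I)) := by
        rw [key, halg]
    _ = (π * r * (r ^ 2 + 1) / Real.sinh (π * r) : ℝ) := by
        rw [Complex.ofReal_div]
        push_cast
        have hs : Complex.sinh ((π : ℂ) * r) ≠ 0 := by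
          rw [show ((π : ℂ) * r) = ((π * r : ℝ) : ℂ) by push_cast; ring, ← Complex.ofReal_sinh]
          exact hsinh
        field_simp
        ring

theorem stmt3 (r : ℝ) (hr : 0 < r) :
    (∫ u in Set.Ioi (0:ℝ), Real.cos (r * u) / (Real.cosh (u / 2)) ^ 4)
    = 4 * π * r * (r ^ 2 + 1) / (3 * Real.sinh (π * r)) := by
  have hF := F_integrable r
  set F := fun u : ℝ => Complex.exp (Complex.I*r*u) / (Real.cosh (u/2):ℂ)^4 with hFdef
  have heven : ∀ x : ℝ, Real.cos (r * |x|) / Real.cosh (|x|/2)^4 = Real.cos (r*x)/Real.cosh (x/2)^4 := by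
    intro x
    rcases le_or_gt 0 x with h|h
    · rw [_root_.abs_of_nonneg h]
    · rw [abs_of_neg h, mul_neg, Real.cos_neg, show -x/2 = -(x/2) by ring, Real.cosh_neg]
  have h2 : 2 * (∫ u in Ioi (0:ℝ), Real.cos (r*u)/Real.cosh (u/2)^4)
      = ∫ u : ℝ, Real.cos (r*u)/Real.cosh (u/2)^4 := by
    rw [← integral_comp_abs (f := fun x => Real.cos (r*x)/Real.cosh (x/2)^4)]
    simp_rw [heven]
  have hre : ∀ u : ℝ, (F u).re = Real.cos (r*u)/Real.cosh (u/2)^4 := by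
    intro u
    have hrw : F u = ((Real.cosh (u/2)^4)⁻¹ : ℝ) * Complex.exp ((r*u:ℝ)*Complex.I) := by
      rw [hFdef]
      push_cast
      rw [div_eq_inv_mul]
      ring_nf
    rw [hrw, Complex.re_ofReal_mul, Complex.exp_ofReal_mul_I_re]
    ring
  have h3 : (∫ u : ℝ, Real.cos (r*u)/Real.cosh (u/2)^4) = (∫ u : ℝ, F u).re := by
    have h := integral_re hF
    simp only [RCLike.re_to_complex] at h
    rw [← h]
    exact integral_congr_ae (Filter.Eventually.of_forall fun u => (hre u).symm)
  have hG4 : Complex.Gamma 4 = 6 := by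
    have h := Complex.Gamma_nat_eq_factorial 3
    rw [show ((3:ℕ):ℂ) + 1 = 4 by norm_num] at h
    rw [h]
    norm_num [Nat.factorial]
  have hGG := Complex.Gamma_mul_Gamma_eq_betaIntegral
      (show 0 < (2 - Complex.I*r).re by simp) (show 0 < (2 + Complex.I*r).re by simp)
  rw [show (2 - Complex.I*(r:ℂ)) + (2 + Complex.I*(r:ℂ)) = 4 by ring, hG4] at hGG
  have hgp := gamma_prod r hr
  have h6 : (6:ℂ) * Complex.betaIntegral (2 - Complex.I*r) (2 + Complex.I*r)
      = ((π * r * (r ^ 2 + 1) / Real.sinh (π * r) : ℝ) : ℂ) := by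
    rw [← hGG, hgp]
  have hFval : (∫ u : ℝ, F u) = ((8/3 * (π * r * (r^2+1) / Real.sinh (π*r)) : ℝ) : ℂ) := by
    have h16 : (16:ℂ) * Complex.betaIntegral (2 - Complex.I*r) (2 + Complex.I*r) = ∫ u : ℝ, F u := by
      rw [beta_eq r, hFdef]; ring
    rw [← h16, show (16:ℂ) * Complex.betaIntegral (2 - Complex.I*(r:ℂ)) (2 + Complex.I*(r:ℂ))
        = (8/3:ℂ) * ((6:ℂ) * Complex.betaIntegral (2 - Complex.I*(r:ℂ)) (2 + Complex.I*(r:ℂ))) by ring,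
      h6]
    push_cast
    ring
  have hIoi : (∫ u in Ioi (0:ℝ), Real.cos (r*u)/Real.cosh (u/2)^4)
      = 1/2 * (8/3 * (π * r * (r^2+1)/Real.sinh (π*r))) := by
    have := h3
    rw [hFval, Complex.ofReal_re] at this
    linarith [h2, this]
  rw [hIoi]
  have hs : Real.sinh (π*r) ≠ 0 := by
    have : (0:ℝ) < Real.sinh (π*r) := by
      rw [← Real.sinh_zero]
      exact Real.sinh_lt_sinh.mpr (by positivity)
    exact this.ne'
  field_simp
  ring
end

section
/- The complex function f(z) = 16 e^{irz} e^{2z} / (e^z + 1)⁴ has a pole of order four at z = πi, with residue Res(f, πi) = −(8/3) i r (r² + 1) e^{−πr}. -/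
set_option maxHeartbeats 1000000

open Real Topology Filter Metric

lemma aux_ne (z : ℂ) (hz : z ≠ (π : ℂ) * Complex.I)
    (hd : ‖z - (π : ℂ) * Complex.I‖ < 2 * π) : Complex.exp z + 1 ≠ 0 := by
  intro h
  have h1 : Complex.exp (z - (π : ℂ) * Complex.I) = 1 := by
    rw [Complex.exp_sub, Complex.exp_pi_mul_I]
    have : Complex.exp z = -1 := by linear_combination h
    rw [this]; norm_num
  obtain ⟨n, hn⟩ := Complex.exp_eq_one_iff.1 h1
  have hn0 : n ≠ 0 := by
    rintro rfl
    simp at hn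
    exact hz (sub_eq_zero.1 hn)
  have h2 : (1 : ℝ) ≤ ‖((n : ℂ))‖ := by
    rw [Complex.norm_intCast]
    exact_mod_cast Int.one_le_abs hn0
  have h3 : ‖(2 * (π : ℂ) * Complex.I)‖ = 2 * π := by
    simp [_root_.abs_of_nonneg Real.pi_pos.le]
  rw [hn, norm_mul, h3] at hd
  nlinarith [Real.pi_pos]

lemma aux_slope : Tendsto (fun z : ℂ => (Complex.exp z + 1) / (z - (π : ℂ) * Complex.I))
    (𝓝[≠] ((π : ℂ) * Complex.I)) (𝓝 (-1)) := by
  have h : HasDerivAt (fun z : ℂ => Complex.exp z + 1) (Complex.exp ((π : ℂ) * Complex.I))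
      ((π : ℂ) * Complex.I) := (Complex.hasDerivAt_exp _).add_const 1
  have := hasDerivAt_iff_tendsto_slope.1 h
  rw [Complex.exp_pi_mul_I] at this
  refine this.congr (fun z => ?_)
  simp [slope_def_field, Complex.exp_pi_mul_I]

noncomputable def hfun : ℂ → ℂ :=
  Function.update (fun z : ℂ => (Complex.exp z + 1) / (z - (π : ℂ) * Complex.I))
    ((π : ℂ) * Complex.I) (-1)

lemma hfun_diff : DifferentiableOn ℂ hfun (ball ((π : ℂ) * Complex.I) (2 * π)) := by
  set c : ℂ := (π : ℂ) * Complex.I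
  set q : ℂ → ℂ := fun z => (Complex.exp z + 1) / (z - c) with hq
  have hlim : limUnder (𝓝[≠] c) q = -1 := aux_slope.limUnder_eq
  have hmem : ball c (2 * π) ∈ 𝓝 c := ball_mem_nhds _ (by positivity)
  have hd : DifferentiableOn ℂ q (ball c (2 * π) \ {c}) := by
    intro z hz
    have hz' : z - c ≠ 0 := sub_ne_zero.2 hz.2
    exact ((Complex.differentiable_exp.differentiableAt.add_const 1).div
      ((differentiableAt_id.sub_const c)) hz').differentiableWithinAt
  have ho : (fun z => q z - q c) =o[𝓝[≠] c] fun z => (z - c)⁻¹ := by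
    rw [Asymptotics.isLittleO_iff_tendsto' ?_]
    · have : Tendsto (fun z => q z - q c) (𝓝[≠] c) (𝓝 (-1 - q c)) :=
        aux_slope.sub_const _
      have h2 : Tendsto (fun z : ℂ => z - c) (𝓝[≠] c) (𝓝 0) := by
        have h3 : Tendsto (fun z : ℂ => z - c) (𝓝 c) (𝓝 (c - c)) :=
          (continuousAt_id.sub continuousAt_const)
        rw [sub_self] at h3
        exact h3.mono_left nhdsWithin_le_nhds
      have := this.mul h2
      rw [mul_zero] at this
      refine this.congr (fun z => ?_)
      rw [div_inv_eq_mul]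
    · filter_upwards [self_mem_nhdsWithin] with z hz h0
      exact absurd h0 (inv_ne_zero (sub_ne_zero.2 hz))
  have := Complex.differentiableOn_update_limUnder_of_isLittleO hmem hd ho
  rwa [hlim] at this

lemma hfun_at : hfun ((π : ℂ) * Complex.I) = -1 := Function.update_self _ _ _

lemma hfun_analytic : AnalyticAt ℂ hfun ((π : ℂ) * Complex.I) :=
  hfun_diff.analyticAt (ball_mem_nhds _ (by positivity))

lemma aux_deriv (a : ℂ) (z : ℂ) (h0 : Complex.exp z + 1 ≠ 0) :
    HasDerivAt (fun w : ℂ => Complex.exp (a * w) *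
        ((8/3) * (a^2 + a) * (Complex.exp w + 1)^2 + (-8 - 8*a/3) * (Complex.exp w + 1)
          + 16/3) / (Complex.exp w + 1)^3)
      (16 * Complex.exp (a * z) * (Complex.exp z)^2 / (Complex.exp z + 1)^4
        - (8/3) * a * (1 - a^2) * (Complex.exp (a * z) / (Complex.exp z + 1))) z := by
  have hu : HasDerivAt (fun w : ℂ => Complex.exp w + 1) (Complex.exp z) z :=
    (Complex.hasDerivAt_exp z).add_const 1
  have hv : HasDerivAt (fun w : ℂ => Complex.exp (a * w)) (Complex.exp (a * z) * a) z := by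
    simpa using ((hasDerivAt_id z).const_mul a).cexp
  have hN : HasDerivAt (fun w : ℂ => Complex.exp (a * w) *
      ((8/3) * (a^2 + a) * (Complex.exp w + 1)^2 + (-8 - 8*a/3) * (Complex.exp w + 1) + 16/3))
      (Complex.exp (a * z) * a *
        ((8/3) * (a^2 + a) * (Complex.exp z + 1)^2 + (-8 - 8*a/3) * (Complex.exp z + 1) + 16/3)
        + Complex.exp (a * z) *
          ((8/3) * (a^2 + a) * (2 * (Complex.exp z + 1) * Complex.exp z)
            + (-8 - 8*a/3) * Complex.exp z)) z := by
    refine hv.mul ?_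
    have := (((hu.pow 2).const_mul ((8:ℂ)/3 * (a^2+a))).add
      (hu.const_mul ((-8:ℂ) - 8*a/3))).add_const ((16:ℂ)/3)
    refine this.congr_deriv ?_
    ring
  have := hN.div (hu.pow 3) (pow_ne_zero 3 h0)
  refine this.congr_deriv ?_
  simp only [Pi.pow_apply]
  set u := Complex.exp z with hud
  set v := Complex.exp (a*z) with hvd
  have h1 : u + 1 ≠ 0 := h0
  norm_num
  field_simp
  ring

/-- `f(z) = 16 e^{irz} e^{2z}/(e^z+1)⁴` has a pole of order four at `z = πi`
with residue `−(8/3) i r (r²+1) e^{−πr}`.  The pole of order four is expressed by a local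
factorization `f = g/(z−πi)⁴` with `g` analytic and nonvanishing at `πi`, and the residue
by the value of `(2πi)⁻¹ ∮ f` over small circles around `πi`. -/
theorem stmt5 (r : ℝ) :
    let f : ℂ → ℂ := fun z =>
      16 * Complex.exp (Complex.I * r * z) * Complex.exp (2 * z) / (Complex.exp z + 1) ^ 4
    (∃ g : ℂ → ℂ, AnalyticAt ℂ g (π * Complex.I) ∧ g (π * Complex.I) ≠ 0 ∧
        ∀ᶠ z in 𝓝[≠] (π * Complex.I), f z = g z / (z - π * Complex.I) ^ 4) ∧
    ∀ ε : ℝ, 0 < ε → ε < π →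
      (2 * π * Complex.I)⁻¹ * (∮ z in C(π * Complex.I, ε), f z)
        = -(8 / 3) * Complex.I * r * (r ^ 2 + 1) * Complex.exp (-(π * r)) := by
  intro f
  set c : ℂ := (π : ℂ) * Complex.I with hc
  constructor
  · -- part 1 : order-four pole factorization
    refine ⟨fun z => 16 * Complex.exp (Complex.I * r * z) * Complex.exp (2 * z) / (hfun z) ^ 4,
      ?_, ?_, ?_⟩
    · have hnum : AnalyticAt ℂ (fun z : ℂ =>
          16 * Complex.exp (Complex.I * r * z) * Complex.exp (2 * z)) c := by
        apply Differentiable.analyticAt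
        fun_prop
      exact hnum.div (hfun_analytic.pow 4) (by rw [hfun_at]; norm_num)
    · show 16 * Complex.exp (Complex.I * r * c) * Complex.exp (2 * c) / (hfun c) ^ 4 ≠ 0
      rw [hfun_at]
      simp [div_eq_mul_inv, Complex.exp_ne_zero]
    · filter_upwards [self_mem_nhdsWithin] with z hz
      have hw : z - c ≠ 0 := sub_ne_zero.2 hz
      have hh : hfun z = (Complex.exp z + 1) / (z - c) := Function.update_of_ne hz _ _
      show f z = _
      rw [hh, div_div, div_pow, div_mul_cancel₀ _ (pow_ne_zero 4 hw)]
  · -- part 2 : the residue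
    intro ε hε0 hεπ
    set a : ℂ := Complex.I * (r : ℂ) with ha
    have hsph : ∀ z ∈ sphere c ε, z ≠ c ∧ Complex.exp z + 1 ≠ 0 := by
      intro z hz
      rw [mem_sphere_iff_norm] at hz
      have hzc : z ≠ c := by
        intro h; rw [h, sub_self, norm_zero] at hz; exact hε0.ne hz
      refine ⟨hzc, aux_ne z hzc ?_⟩
      rw [hz]
      nlinarith [Real.pi_pos]
    set ρ : ℂ := (8:ℂ)/3 * a * (1 - a^2) with hρ
    set E : ℂ := Complex.exp (a * c) with hE
    set S : ℂ → ℂ := fun z => Complex.exp (a*z) / (Complex.exp z + 1) with hS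
    set D : ℂ → ℂ := fun z =>
      16 * Complex.exp (a*z) * (Complex.exp z)^2 / (Complex.exp z + 1)^4 - ρ * S z with hD
    set G : ℂ → ℂ := fun z => S z + E * (z - c)⁻¹ with hG
    -- the integral of D vanishes
    have ID : (∮ z in C(c, ε), D z) = 0 := by
      refine circleIntegral.integral_eq_zero_of_hasDerivWithinAt
        (f := fun w : ℂ => Complex.exp (a * w) *
          ((8/3) * (a^2 + a) * (Complex.exp w + 1)^2 + (-8 - 8*a/3) * (Complex.exp w + 1)
            + 16/3) / (Complex.exp w + 1)^3) hε0.le (fun z hz => ?_)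
      exact (aux_deriv a z (hsph z hz).2).hasDerivWithinAt
    -- the integral of G vanishes (removable singularity)
    have hGd : DifferentiableOn ℂ G (ball c (2*π) \ {c}) := by
      intro z hz
      have hz1 : z ≠ c := hz.2
      have hz2 : Complex.exp z + 1 ≠ 0 := by
        refine aux_ne z hz1 ?_
        have := hz.1
        rw [mem_ball, dist_eq_norm] at this
        exact this
      have hz3 : z - c ≠ 0 := sub_ne_zero.2 hz1
      refine DifferentiableAt.differentiableWithinAt ?_
      refine DifferentiableAt.add ?_ ?_
      · exact ((Complex.differentiable_exp.comp (differentiable_id.const_mul a)).differentiableAt).div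
          (Complex.differentiable_exp.differentiableAt.add_const 1) hz2
      · exact (differentiableAt_const E).mul ((differentiableAt_id.sub_const c).inv hz3)
    have key : Tendsto (fun z => (G z - G c) * (z - c)) (𝓝[≠] c) (𝓝 0) := by
      have T1 : Tendsto (fun z : ℂ => Complex.exp (a*z)) (𝓝[≠] c) (𝓝 E) := by
        exact ((by fun_prop : Continuous fun z : ℂ => Complex.exp (a*z)).tendsto c).mono_left
          nhdsWithin_le_nhds
      have T2 : Tendsto (fun z : ℂ => ((Complex.exp z + 1) / (z - c))⁻¹) (𝓝[≠] c)
          (𝓝 ((-1 : ℂ)⁻¹)) := aux_slope.inv₀ (by norm_num)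
      have T3 := T1.mul T2
      have T4 : Tendsto (fun z : ℂ => z - c) (𝓝[≠] c) (𝓝 0) := by
        have h3 : Tendsto (fun z : ℂ => z - c) (𝓝 c) (𝓝 (c - c)) :=
          (continuousAt_id.sub continuousAt_const)
        rw [sub_self] at h3
        exact h3.mono_left nhdsWithin_le_nhds
      have T5 := (T3.add_const E).add (T4.const_mul (-(G c)))
      have heq : ∀ᶠ z in 𝓝[≠] c, Complex.exp (a*z) * ((Complex.exp z + 1) / (z - c))⁻¹ + E
          + (-(G c)) * (z - c) = (G z - G c) * (z - c) := by
        filter_upwards [self_mem_nhdsWithin] with z hz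
        have hz3 : z - c ≠ 0 := sub_ne_zero.2 hz
        rw [inv_div]
        simp only [hG, hS]
        field_simp
        ring
      have hval : E * (-1:ℂ)⁻¹ + E + -(G c) * 0 = 0 := by norm_num
      rw [hval] at T5
      exact Tendsto.congr' heq T5
    have ho : (fun z => G z - G c) =o[𝓝[≠] c] fun z => (z - c)⁻¹ := by
      rw [Asymptotics.isLittleO_iff_tendsto' ?_]
      · refine key.congr (fun z => ?_)
        rw [div_inv_eq_mul]
      · filter_upwards [self_mem_nhdsWithin] with z hz h0
        exact absurd h0 (inv_ne_zero (sub_ne_zero.2 hz))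
    have GD : DifferentiableOn ℂ (Function.update G c (limUnder (𝓝[≠] c) G))
        (ball c (2*π)) :=
      Complex.differentiableOn_update_limUnder_of_isLittleO
        (ball_mem_nhds _ (by positivity)) hGd ho
    have hεsub : closedBall c ε ⊆ ball c (2*π) := by
      refine closedBall_subset_ball ?_
      nlinarith [Real.pi_pos]
    have IG0 : (∮ z in C(c, ε), Function.update G c (limUnder (𝓝[≠] c) G) z) = 0 := by
      refine Complex.circleIntegral_eq_zero_of_differentiable_on_off_countable hε0.le
        Set.countable_empty (GD.continuousOn.mono hεsub) (fun z hz => ?_)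
      exact GD.differentiableAt (isOpen_ball.mem_nhds
        (hεsub (ball_subset_closedBall hz.1)))
    have IG : (∮ z in C(c, ε), G z) = 0 := by
      rw [circleIntegral.integral_congr hε0.le (g := Function.update G c (limUnder (𝓝[≠] c) G))
        (fun z hz => (Function.update_of_ne (hsph z hz).1 _ _).symm)]
      exact IG0
    -- integral of (z - c)⁻¹
    have Iinv : (∮ z in C(c, ε), (z - c)⁻¹) = 2 * π * Complex.I :=
      circleIntegral.integral_sub_center_inv c hε0.ne'
    -- decomposition of f on the sphere
    have hEq : Set.EqOn f
        (fun z => D z - ((-ρ) * G z - (-(ρ * E)) * (z - c)⁻¹)) (sphere c ε) := by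
      intro z hz
      have h2z : Complex.exp (2*z) = (Complex.exp z)^2 := by
        rw [two_mul, Complex.exp_add, sq]
      have haz : Complex.I * (r:ℂ) * z = a * z := by rw [ha]
      show 16 * Complex.exp (Complex.I * r * z) * Complex.exp (2 * z) / (Complex.exp z + 1) ^ 4
        = _
      rw [haz, h2z]
      simp only [hD, hG, hS]
      ring
    -- integrability of the pieces
    have hcontD : ContinuousOn D (sphere c ε) := by
      refine ContinuousOn.sub ?_ ?_
      · exact ContinuousOn.div (by fun_prop) (by fun_prop) (fun z hz => pow_ne_zero 4 (hsph z hz).2)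
      · exact ContinuousOn.mul continuousOn_const
          (ContinuousOn.div (by fun_prop) (by fun_prop) (fun z hz => (hsph z hz).2))
    have hcontG : ContinuousOn G (sphere c ε) := by
      refine ContinuousOn.add ?_ ?_
      · exact ContinuousOn.div (by fun_prop) (by fun_prop) (fun z hz => (hsph z hz).2)
      · exact ContinuousOn.mul continuousOn_const
          (ContinuousOn.inv₀ (by fun_prop) (fun z hz => sub_ne_zero.2 (hsph z hz).1))
    have hintD : CircleIntegrable D c ε := hcontD.circleIntegrable hε0.le
    have hintG : CircleIntegrable (fun z => (-ρ) * G z) c ε :=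
      ((continuousOn_const.mul hcontG)).circleIntegrable hε0.le
    have hcontinv : ContinuousOn (fun z : ℂ => (-(ρ * E)) * (z - c)⁻¹) (sphere c ε) :=
      ContinuousOn.mul continuousOn_const
        (ContinuousOn.inv₀ (by fun_prop) (fun z hz => sub_ne_zero.2 (hsph z hz).1))
    have hintinv : CircleIntegrable (fun z => (-(ρ * E)) * (z - c)⁻¹) c ε :=
      hcontinv.circleIntegrable hε0.le
    have hinner : CircleIntegrable (fun z => (-ρ) * G z - (-(ρ * E)) * (z - c)⁻¹) c ε :=
      ((continuousOn_const.mul hcontG).sub hcontinv).circleIntegrable hε0.le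
    -- computing the integral
    have hIf : (∮ z in C(c, ε), f z) = (-(ρ * E)) * (2 * π * Complex.I) := by
      rw [circleIntegral.integral_congr hε0.le hEq,
        circleIntegral.integral_sub hintD hinner,
        circleIntegral.integral_sub hintG hintinv, ID]
      have h1 : (∮ z in C(c, ε), (-ρ) * G z) = 0 := by
        have := circleIntegral.integral_smul (𝕜 := ℂ) (-ρ) G c ε
        simp only [smul_eq_mul] at this
        rw [this, IG, mul_zero]
      have h2 : (∮ z in C(c, ε), (-(ρ * E)) * (z - c)⁻¹) = (-(ρ * E)) * (2 * π * Complex.I) := by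
        have := circleIntegral.integral_smul (𝕜 := ℂ) (-(ρ * E)) (fun z => (z - c)⁻¹) c ε
        simp only [smul_eq_mul] at this
        rw [this, Iinv]
      rw [h1, h2]
      ring
    rw [hIf]
    have h2pi : (2 * (π:ℂ) * Complex.I) ≠ 0 := Complex.two_pi_I_ne_zero
    rw [inv_mul_eq_div, mul_div_assoc, div_self h2pi, mul_one]
    -- final arithmetic
    have hac : a * c = -((π:ℂ) * (r:ℂ)) := by
      rw [ha, hc]
      calc Complex.I * (r:ℂ) * ((π:ℂ) * Complex.I)
          = Complex.I * Complex.I * ((r:ℂ) * (π:ℂ)) := by ring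
        _ = -((π:ℂ) * (r:ℂ)) := by rw [Complex.I_mul_I]; ring
    rw [hρ, hE, hac, ha]
    have hI := Complex.I_sq
    linear_combination (8/3 * Complex.I * (r:ℂ)^3 * Complex.exp (-((π:ℂ) * (r:ℂ)))) * hI
end

section
/- The function f(z) = (cosh z − i r sinh z) e^{irz} / sinh³z, where r is a real parameter, has a pole of order three at z = 0 with residue r²/2, and a pole of order three at z = πi with residue (r²/2) e^{−πr}. -/
open Real Topology Filter Metric

lemma deriv_h (r : ℝ) {z : ℂ} (hs : Complex.sinh z ≠ 0) :
    HasDerivAt (fun w => -(1/2) * Complex.exp (Complex.I*r*w) / Complex.sinh w ^ 2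
        + Complex.I * r / 2 * Complex.exp (Complex.I*r*w) * Complex.cosh w / Complex.sinh w)
      ((Complex.cosh z - Complex.I * r * Complex.sinh z) * Complex.exp (Complex.I * r * z)
          / Complex.sinh z ^ 3
        - (r:ℂ)^2/2 * (Complex.exp (Complex.I*r*z) * Complex.cosh z / Complex.sinh z)) z := by
  have hE : HasDerivAt (fun w => Complex.exp (Complex.I*r*w))
      (Complex.I*r*Complex.exp (Complex.I*r*z)) z := by
    have h1 : HasDerivAt (fun w : ℂ => Complex.I*r*w) (Complex.I*r) z := by
      simpa using (hasDerivAt_id z).const_mul (Complex.I*(r:ℂ))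
    simpa [mul_comm] using h1.cexp
  have hS := Complex.hasDerivAt_sinh z
  have hC := Complex.hasDerivAt_cosh z
  have h1 := (hE.const_mul (-(1/2) : ℂ)).div (hS.pow 2) (pow_ne_zero 2 hs)
  have h2 := (((hE.const_mul (Complex.I*r/2)).mul hC)).div hS hs
  refine (h1.add h2).congr_deriv ?_
  symm
  simp only [Pi.pow_apply, Pi.mul_apply]
  have hkey := Complex.cosh_sq_sub_sinh_sq z
  field_simp
  ring_nf
  linear_combination (Complex.sinh z^2*Complex.I*(r:ℂ)) * hkey + (-Complex.sinh z^3*Complex.cosh z*(r:ℂ)^2) * Complex.I_sq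

lemma sinh_fact (a : ℂ) (ha : Complex.sinh a = 0) (hca : Complex.cosh a ≠ 0) :
    ∃ g : ℂ → ℂ, AnalyticAt ℂ g a ∧ g a = Complex.cosh a ∧
      ∀ᶠ z in 𝓝 a, Complex.sinh z = (z - a) * g z := by
  have hsa : AnalyticAt ℂ Complex.sinh a := Complex.differentiable_sinh.analyticAt a
  have hord : analyticOrderAt Complex.sinh a ≠ ⊤ := by
    intro h
    rw [analyticOrderAt_eq_top] at h
    have h0 : Complex.sinh =ᶠ[𝓝 a] (fun _ => (0:ℂ)) := h
    have hd := h0.deriv_eq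
    rw [(Complex.hasDerivAt_sinh a).deriv] at hd
    simp at hd
    exact hca hd
  obtain ⟨n, hn⟩ := WithTop.ne_top_iff_exists.mp hord
  obtain ⟨g, hg, hg0, hfg⟩ := hsa.analyticOrderAt_eq_natCast.mp hn.symm
  simp only [smul_eq_mul] at hfg
  match n with
  | 0 =>
    exfalso
    have := hfg.self_of_nhds
    simp [ha] at this
    exact hg0 this.symm
  | (m+1) =>
    have hR : HasDerivAt (fun z => (z - a) ^ (m+1) * g z)
        ((((m:ℂ)+1) * (a - a) ^ m * 1) * g a + (a-a)^(m+1) * (deriv g a)) a := by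
      have h1 : HasDerivAt (fun z : ℂ => (z - a) ^ (m+1)) (((m:ℂ)+1) * (a - a) ^ m * 1) a := by
        simpa using ((hasDerivAt_id a).sub_const a).fun_pow (m+1)
      exact h1.mul hg.differentiableAt.hasDerivAt
    have hSa : HasDerivAt Complex.sinh
        ((((m:ℂ)+1) * (a - a) ^ m * 1) * g a + (a-a)^(m+1) * (deriv g a)) a :=
      hR.congr_of_eventuallyEq hfg
    have huniq := hSa.unique (Complex.hasDerivAt_sinh a)
    match m with
    | 0 =>
      refine ⟨g, hg, ?_, by simpa using hfg⟩
      simp at huniq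
      exact huniq
    | (k+1) =>
      exfalso
      apply hca
      rw [← huniq]
      simp

lemma sinh_zeros {z : ℂ} (h : Complex.sinh z = 0) : ∃ k : ℤ, z = (k : ℂ) * (Real.pi : ℂ) * Complex.I := by
  have hsin : Complex.sin (z * Complex.I) = 0 := by rw [Complex.sin_mul_I, h, zero_mul]
  obtain ⟨k, hk⟩ := Complex.sin_eq_zero_iff.mp hsin
  refine ⟨-k, ?_⟩
  have h2 : z * Complex.I * Complex.I = (k : ℂ) * (Real.pi : ℂ) * Complex.I := by rw [hk]
  rw [mul_assoc, Complex.I_mul_I, mul_neg_one] at h2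
  push_cast
  linear_combination -h2

lemma sinh_ne_on {a : ℂ} {k₀ : ℤ} (hak : a = (k₀ : ℂ) * (Real.pi : ℂ) * Complex.I)
    {z : ℂ} (hne : z ≠ a) (hlt : ‖z - a‖ < Real.pi) : Complex.sinh z ≠ 0 := by
  intro h
  obtain ⟨k, hkz⟩ := sinh_zeros h
  have hkk : k ≠ k₀ := by
    rintro rfl
    exact hne (hkz.trans hak.symm)
  have hza : z - a = ((k - k₀ : ℤ) : ℂ) * (Real.pi : ℂ) * Complex.I := by
    rw [hkz, hak]; push_cast; ring
  have habs : ‖z - a‖ = |((k - k₀ : ℤ) : ℝ)| * Real.pi := by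
    rw [hza, norm_mul, norm_mul, Complex.norm_I, Complex.norm_intCast, Complex.norm_real, Real.norm_eq_abs,
      mul_one, abs_of_nonneg Real.pi_pos.le]
  have h1 : (1 : ℝ) ≤ |((k - k₀ : ℤ) : ℝ)| := by
    rw [← Int.cast_abs]
    exact_mod_cast Int.one_le_abs (sub_ne_zero.mpr hkk)
  have : Real.pi ≤ ‖z - a‖ := by
    rw [habs]
    nlinarith [Real.pi_pos]
  linarith

lemma circleIntegral_add' {f g : ℂ → ℂ} {c : ℂ} {R : ℝ} (hf : CircleIntegrable f c R)
    (hg : CircleIntegrable g c R) :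
    (∮ z in C(c,R), (f z + g z)) = (∮ z in C(c,R), f z) + ∮ z in C(c,R), g z := by
  simp only [circleIntegral, smul_add, intervalIntegral.integral_add hf.out hg.out]

lemma key (r : ℝ) (a : ℂ) (ha : Complex.sinh a = 0) (hca : Complex.cosh a ≠ 0)
    (hz : ∀ z : ℂ, z ≠ a → ‖z - a‖ < Real.pi → Complex.sinh z ≠ 0) :
    (∃ g : ℂ → ℂ, AnalyticAt ℂ g a ∧ g a ≠ 0 ∧
        ∀ᶠ z in 𝓝[≠] a,
          (Complex.cosh z - Complex.I * r * Complex.sinh z) * Complex.exp (Complex.I * r * z)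
            / Complex.sinh z ^ 3 = g z / (z - a) ^ 3) ∧
    ∀ ε : ℝ, 0 < ε → ε < Real.pi →
      (2 * Real.pi * Complex.I)⁻¹ *
        (∮ z in C(a, ε),
          (Complex.cosh z - Complex.I * r * Complex.sinh z) * Complex.exp (Complex.I * r * z)
            / Complex.sinh z ^ 3)
        = (r:ℂ) ^ 2 / 2 * Complex.exp (Complex.I * r * a) := by
  obtain ⟨g, hg, hga, hfg⟩ := sinh_fact a ha hca
  have hga0 : g a ≠ 0 := by rw [hga]; exact hca
  constructor
  · -- pole of order 3
    refine ⟨fun z => (Complex.cosh z - Complex.I * r * Complex.sinh z)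
        * Complex.exp (Complex.I * r * z) / g z ^ 3, ?_, ?_, ?_⟩
    · have hnum : Differentiable ℂ (fun z : ℂ =>
          (Complex.cosh z - Complex.I * r * Complex.sinh z) * Complex.exp (Complex.I * r * z)) := by
        apply Differentiable.mul
        · exact Complex.differentiable_cosh.sub (Complex.differentiable_sinh.const_mul _)
        · exact Complex.differentiable_exp.comp (differentiable_id.const_mul _)
      exact (hnum.analyticAt a).div (hg.pow 3) (pow_ne_zero 3 hga0)
    · apply div_ne_zero
      · apply mul_ne_zero _ (Complex.exp_ne_zero _)
        rw [ha]
        simpa using hca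
      · exact pow_ne_zero 3 hga0
    · filter_upwards [hfg.filter_mono nhdsWithin_le_nhds, self_mem_nhdsWithin] with z hsz hza
      rw [hsz, mul_pow]
      conv_rhs => rw [div_div]
      rw [mul_comm ((z-a)^3) (g z^3)]
  · intro ε hε0 hεπ
    have hsph : ∀ z ∈ sphere a ε, Complex.sinh z ≠ 0 ∧ z ≠ a := by
      intro z hz'
      rw [mem_sphere_iff_norm] at hz'
      have hza : z ≠ a := by
        intro h; rw [h] at hz'; simp at hz'; linarith
      exact ⟨hz z hza (by rw [hz']; exact hεπ), hza⟩
    set E : ℂ → ℂ := fun z => Complex.exp (Complex.I * r * z) with hE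
    set q : ℂ → ℂ := fun z => if z = a then E a
      else (z - a) * (E z * Complex.cosh z / Complex.sinh z) with hq
    have hqdiff : DifferentiableOn ℂ q (closedBall a ε) := by
      intro z hzball
      rw [mem_closedBall, Complex.dist_eq] at hzball
      by_cases hzea : z = a
      · subst hzea
        have hev : q =ᶠ[𝓝 z] fun w => E w * Complex.cosh w / g w := by
          filter_upwards [hfg, hg.continuousAt.eventually_ne hga0] with w hw hgw
          by_cases hwa : w = z
          · subst hwa
            simp only [hq, if_pos rfl]
            rw [hga, mul_div_assoc, div_self hca, mul_one]
          · simp only [hq, if_neg hwa]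
            rw [hw]
            field_simp [sub_ne_zero.mpr hwa, hgw]
        have hda : DifferentiableAt ℂ (fun w => E w * Complex.cosh w / g w) z := by
          apply DifferentiableAt.div _ hg.differentiableAt hga0
          apply DifferentiableAt.mul
          · exact (Complex.differentiable_exp.comp (differentiable_id.const_mul _)).differentiableAt
          · exact Complex.differentiable_cosh.differentiableAt
        exact (hda.congr_of_eventuallyEq hev).differentiableWithinAt
      · have hsz : Complex.sinh z ≠ 0 := hz z hzea (lt_of_le_of_lt hzball hεπ)
        have hev : q =ᶠ[𝓝 z] fun w => (w - a) * (E w * Complex.cosh w / Complex.sinh w) := by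
          filter_upwards [eventually_ne_nhds hzea] with w hw
          simp only [hq, if_neg hw]
        have hda : DifferentiableAt ℂ
            (fun w => (w - a) * (E w * Complex.cosh w / Complex.sinh w)) z := by
          apply DifferentiableAt.mul
          · exact (differentiable_id.sub_const a).differentiableAt
          · apply DifferentiableAt.div _ Complex.differentiable_sinh.differentiableAt hsz
            apply DifferentiableAt.mul
            · exact (Complex.differentiable_exp.comp (differentiable_id.const_mul _)).differentiableAt
            · exact Complex.differentiable_cosh.differentiableAt
        exact (hda.congr_of_eventuallyEq hev).differentiableWithinAt
    -- now the integral computation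
    have hcongr : Set.EqOn
        (fun z => (Complex.cosh z - Complex.I * r * Complex.sinh z) * E z / Complex.sinh z ^ 3)
        (fun z => ((Complex.cosh z - Complex.I * r * Complex.sinh z) * E z / Complex.sinh z ^ 3
            - (r:ℂ)^2/2 * (E z * Complex.cosh z / Complex.sinh z))
          + ((r:ℂ)^2/2) • ((z - a)⁻¹ • q z)) (sphere a ε) := by
      intro z hz'
      obtain ⟨hs, hza⟩ := hsph z hz'
      simp only [smul_eq_mul, hq, if_neg hza]
      rw [← mul_assoc ((z-a)⁻¹), inv_mul_cancel₀ (sub_ne_zero.mpr hza), one_mul]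
      ring
    have hc1 : ContinuousOn
        (fun z => (Complex.cosh z - Complex.I * r * Complex.sinh z) * E z / Complex.sinh z ^ 3
            - (r:ℂ)^2/2 * (E z * Complex.cosh z / Complex.sinh z)) (sphere a ε) := by
      have hcE : Continuous E := Complex.continuous_exp.comp (continuous_const.mul continuous_id)
      apply ContinuousOn.sub
      · exact ContinuousOn.div
          (((Complex.continuous_cosh.sub (continuous_const.mul Complex.continuous_sinh)).mul hcE).continuousOn)
          ((Complex.continuous_sinh.pow 3).continuousOn)
          (fun z hz' => pow_ne_zero 3 (hsph z hz').1)
      · exact ContinuousOn.mul continuousOn_const (ContinuousOn.div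
          ((hcE.mul Complex.continuous_cosh).continuousOn)
          Complex.continuous_sinh.continuousOn
          (fun z hz' => (hsph z hz').1))
    have hc2 : ContinuousOn (fun z : ℂ => ((r:ℂ)^2/2) • ((z - a)⁻¹ • q z)) (sphere a ε) := by
      refine ContinuousOn.const_smul (g := fun z : ℂ => (z - a)⁻¹ • q z) ?_ ((r:ℂ)^2/2)
      apply ContinuousOn.smul (f := fun z : ℂ => (z - a)⁻¹) (g := q)
      · exact ContinuousOn.inv₀ ((continuous_id.sub continuous_const).continuousOn)
          (fun z hz' => sub_ne_zero.mpr (hsph z hz').2)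
      · exact hqdiff.continuousOn.mono sphere_subset_closedBall
    rw [_root_.circleIntegral.integral_congr hε0.le hcongr,
      circleIntegral_add' (hc1.circleIntegrable hε0.le) (hc2.circleIntegrable hε0.le)]
    have hzero : (∮ z in C(a, ε),
        ((Complex.cosh z - Complex.I * r * Complex.sinh z) * E z / Complex.sinh z ^ 3
            - (r:ℂ)^2/2 * (E z * Complex.cosh z / Complex.sinh z))) = 0 := by
      apply _root_.circleIntegral.integral_eq_zero_of_hasDerivWithinAt hε0.le
      intro z hz'
      exact (deriv_h r (hsph z hz').1).hasDerivWithinAt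
    have hcauchy : (∮ z in C(a, ε), (z - a)⁻¹ • q z) = (2 * Real.pi * Complex.I) • q a :=
      hqdiff.circleIntegral_sub_inv_smul (mem_ball_self hε0)
    rw [hzero, _root_.circleIntegral.integral_smul, hcauchy, zero_add]
    have hqa : q a = E a := by simp only [hq, if_pos rfl]
    rw [hqa]
    have h2pi : (2 * (Real.pi:ℂ) * Complex.I) ≠ 0 := by
      simp [Real.pi_ne_zero, Complex.I_ne_zero]
    simp only [smul_eq_mul]
    field_simp
    ring

/-- `f(z) = (cosh z − i r sinh z) e^{irz}/sinh³ z` has a pole of order three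
at `z = 0` with residue `r²/2`, and a pole of order three at `z = πi` with residue
`(r²/2) e^{−πr}`. -/
theorem stmt7 (r : ℝ) :
    let f : ℂ → ℂ := fun z =>
      (Complex.cosh z - Complex.I * r * Complex.sinh z) * Complex.exp (Complex.I * r * z)
        / (Complex.sinh z) ^ 3
    ((∃ g : ℂ → ℂ, AnalyticAt ℂ g 0 ∧ g 0 ≠ 0 ∧
        ∀ᶠ z in 𝓝[≠] (0 : ℂ), f z = g z / (z - 0) ^ 3) ∧
      ∀ ε : ℝ, 0 < ε → ε < π →
        (2 * π * Complex.I)⁻¹ * (∮ z in C(0, ε), f z) = r ^ 2 / 2) ∧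
    ((∃ g : ℂ → ℂ, AnalyticAt ℂ g (π * Complex.I) ∧ g (π * Complex.I) ≠ 0 ∧
        ∀ᶠ z in 𝓝[≠] (π * Complex.I), f z = g z / (z - π * Complex.I) ^ 3) ∧
      ∀ ε : ℝ, 0 < ε → ε < π →
        (2 * π * Complex.I)⁻¹ * (∮ z in C(π * Complex.I, ε), f z)
          = (r ^ 2 / 2) * Complex.exp (-(π * r))) := by
  intro f
  constructor
  · have h0 := key r 0 Complex.sinh_zero (by rw [Complex.cosh_zero]; exact one_ne_zero)
      (fun z hne hlt => sinh_ne_on (k₀ := 0) (by simp) hne hlt)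
    refine ⟨h0.1, fun ε hε0 hεπ => ?_⟩
    have := h0.2 ε hε0 hεπ
    simpa using this
  · have hak : (π : ℂ) * Complex.I = ((1 : ℤ) : ℂ) * (π : ℂ) * Complex.I := by push_cast; ring
    have hsinh : Complex.sinh ((π : ℂ) * Complex.I) = 0 := by
      rw [Complex.sinh_mul_I, Complex.sin_pi, zero_mul]
    have hcosh : Complex.cosh ((π : ℂ) * Complex.I) ≠ 0 := by
      rw [Complex.cosh_mul_I, Complex.cos_pi]
      norm_num
    have h0 := key r ((π : ℂ) * Complex.I) hsinh hcosh
      (fun z hne hlt => sinh_ne_on (k₀ := 1) hak hne hlt)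
    refine ⟨h0.1, fun ε hε0 hεπ => ?_⟩
    have := h0.2 ε hε0 hεπ
    rw [this]
    congr 1
    congr 1
    rw [show Complex.I * (r : ℂ) * ((π : ℂ) * Complex.I)
        = (Complex.I * Complex.I) * ((r : ℂ) * (π : ℂ)) by ring, Complex.I_mul_I]
    ring
end

section
/- For the Harish-Chandra c-function of SU(2,1) with p = 2, q = 1, given by c(r)^{−1} = (Γ((p+q)/2)/Γ(p+q)) · (Γ(ir + p/2)/Γ(ir)) · (Γ(ir/2 + p/4 + q/2)/Γ(ir/2 + p/4)), one has c(2r)^{−1} c(−2r)^{−1} = (π/4) r³ / tanh(πr) for real r ≠ 0. -/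
open Real

/-- for the Harish-Chandra c-function of `SU(2,1)` (`p = 2`, `q = 1`), where
`c(t)⁻¹ = (Γ(3/2)/Γ(3)) · (Γ(it+1)/Γ(it)) · (Γ(it/2+1)/Γ(it/2+1/2))`, one has
`c(2r)⁻¹ c(−2r)⁻¹ = (π/4) r³ / tanh(πr)` for real `r ≠ 0`. -/
theorem stmt9 (r : ℝ) (hr : r ≠ 0) :
    let cInv : ℝ → ℂ := fun t =>
      (Complex.Gamma (3 / 2) / Complex.Gamma 3) *
      (Complex.Gamma (Complex.I * t + 1) / Complex.Gamma (Complex.I * t)) *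
      (Complex.Gamma (Complex.I * t / 2 + 1) / Complex.Gamma (Complex.I * t / 2 + 1 / 2))
    cInv (2 * r) * cInv (-(2 * r)) = (((π / 4) * r ^ 3 / Real.tanh (π * r) : ℝ) : ℂ) := by
  intro cInv
  have hGne : ∀ w : ℂ, w.im ≠ 0 → Complex.Gamma w ≠ 0 := fun w hw =>
    Complex.Gamma_ne_zero (fun m h => hw (by rw [h]; simp))
  have e1 : Complex.I * ((2*r : ℝ) : ℂ) = 2 * Complex.I * r := by push_cast; ring
  have e2 : Complex.I * ((-(2*r) : ℝ) : ℂ) = -(2 * Complex.I * r) := by push_cast; ring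
  simp only [cInv, e1, e2]
  have him1 : (2 * Complex.I * (r:ℂ)).im ≠ 0 := by simpa using hr
  have him2 : (-(2 * Complex.I * (r:ℂ))).im ≠ 0 := by simpa using hr
  have hz1 : (2 * Complex.I * (r:ℂ)) ≠ 0 := fun h => him1 (by rw [h]; simp)
  have hz2 : (-(2 * Complex.I * (r:ℂ))) ≠ 0 := by simpa using hz1
  have hzh : (Complex.I * (r:ℂ)) ≠ 0 := by simp [Complex.I_ne_zero, hr]
  have f1 : Complex.Gamma (2 * Complex.I * r + 1) / Complex.Gamma (2 * Complex.I * r)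
      = 2 * Complex.I * r := by
    rw [Complex.Gamma_add_one _ hz1, mul_div_assoc, div_self (hGne _ him1), mul_one]
  have f2 : Complex.Gamma (-(2 * Complex.I * r) + 1) / Complex.Gamma (-(2 * Complex.I * r))
      = -(2 * Complex.I * r) := by
    rw [Complex.Gamma_add_one _ hz2, mul_div_assoc, div_self (hGne _ him2), mul_one]
  rw [f1, f2]
  have e3 : 2 * Complex.I * (r:ℂ) / 2 = Complex.I * r := by ring
  have e4 : -(2 * Complex.I * (r:ℂ)) / 2 = -(Complex.I * r) := by ring
  rw [e3, e4]
  set z : ℂ := Complex.I * r with hzdef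
  have g1 : Complex.Gamma (z + 1) = z * Complex.Gamma z := Complex.Gamma_add_one _ hzh
  have g2 : Complex.Gamma (-z + 1) = -z * Complex.Gamma (-z) :=
    Complex.Gamma_add_one _ (neg_ne_zero.mpr hzh)
  rw [g1, g2]
  have refl1 : Complex.Gamma z * Complex.Gamma (1 - z)
      = (π : ℂ) / Complex.sin (π * z) := Complex.Gamma_mul_Gamma_one_sub z
  have refl2 : Complex.Gamma (z + 1/2) * Complex.Gamma (-z + 1/2)
      = (π : ℂ) / Complex.cos (π * z) := by
    have h := Complex.Gamma_mul_Gamma_one_sub (z + 1/2)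
    rw [show (1 : ℂ) - (z + 1/2) = -z + 1/2 by ring] at h
    rw [h, show (π:ℂ) * (z + 1/2) = π * z + π/2 by ring,
      Complex.sin_add_pi_div_two]
  have hsin : Complex.sin ((π:ℂ) * z) = (Real.sinh (π * r) : ℂ) * Complex.I := by
    rw [hzdef, show (π:ℂ) * (Complex.I * r) = ((π * r : ℝ) : ℂ) * Complex.I by push_cast; ring,
      Complex.sin_mul_I, Complex.ofReal_sinh]
  have hcos : Complex.cos ((π:ℂ) * z) = (Real.cosh (π * r) : ℂ) := by
    rw [hzdef, show (π:ℂ) * (Complex.I * r) = ((π * r : ℝ) : ℂ) * Complex.I by push_cast; ring,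
      Complex.cos_mul_I, Complex.ofReal_cosh]
  have h32 : Complex.Gamma (3/2) = (1/2) * (π:ℂ) ^ (1/2 : ℂ) := by
    rw [show (3/2 : ℂ) = 1/2 + 1 by norm_num, Complex.Gamma_add_one _ (by norm_num),
      Complex.Gamma_one_half_eq]
  have h3 : Complex.Gamma 3 = 2 := by
    rw [show (3 : ℂ) = (2:ℕ) + 1 by norm_num, Complex.Gamma_nat_eq_factorial]
    norm_num
  have hsqrt : (π:ℂ) ^ (1/2 : ℂ) * (π:ℂ) ^ (1/2 : ℂ) = (π : ℂ) := by
    rw [← Complex.cpow_add _ _ (by exact_mod_cast Real.pi_ne_zero)]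
    norm_num
  have hsinh : Real.sinh (π * r) ≠ 0 := by
    simp [Real.sinh_eq_zero, Real.pi_ne_zero, hr]
  have hcosh : Real.cosh (π * r) ≠ 0 := (Real.cosh_pos _).ne'
  have hΓz2 : Complex.Gamma (z + 1/2) ≠ 0 := hGne _ (by simp [hzdef, hr])
  have hΓnz2 : Complex.Gamma (-z + 1/2) ≠ 0 := hGne _ (by simp [hzdef, hr])
  have prod3 : z * Complex.Gamma z / Complex.Gamma (z + 1/2) *
      (-z * Complex.Gamma (-z) / Complex.Gamma (-z + 1/2))
      = z * (Real.cosh (π*r) : ℂ) / ((Real.sinh (π*r) : ℂ) * Complex.I) := by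
    rw [div_mul_div_comm,
      show z * Complex.Gamma z * (-z * Complex.Gamma (-z))
        = z * (Complex.Gamma z * Complex.Gamma (1 - z)) by
        rw [show (1:ℂ) - z = -z + 1 by ring, g2]; ring,
      refl1, refl2, hsin, hcos]
    have hπ : (π:ℂ) ≠ 0 := by exact_mod_cast Real.pi_ne_zero
    have hS : ((Real.sinh (π * r) : ℝ) : ℂ) ≠ 0 := Complex.ofReal_ne_zero.mpr hsinh
    have hC : ((Real.cosh (π * r) : ℝ) : ℂ) ≠ 0 := Complex.ofReal_ne_zero.mpr hcosh
    field_simp [hS, hC, hπ, Complex.I_ne_zero]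
  rw [show ∀ a b c d e f : ℂ, a * b * c * (d * e * f) = (a * d) * (b * e) * (c * f)
    from fun a b c d e f => by ring]
  rw [prod3, h32, h3, hzdef, Real.tanh_eq_sinh_div_cosh]
  have hsinh' : ((Real.sinh (π * r) : ℝ) : ℂ) ≠ 0 := by exact_mod_cast hsinh
  have hcosh' : ((Real.cosh (π * r) : ℝ) : ℂ) ≠ 0 := by exact_mod_cast hcosh
  push_cast
  field_simp
  have hSc : Complex.sinh ((π:ℂ) * (r:ℂ)) ≠ 0 := by
    rw [show ((π:ℂ) * (r:ℂ)) = ((π * r : ℝ) : ℂ) by push_cast; ring, ← Complex.ofReal_sinh]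
    exact_mod_cast hsinh
  have hSc' : Complex.sinh ((r:ℂ) * (π:ℂ)) ≠ 0 := by rw [mul_comm]; exact hSc
  rw [neg_div', div_left_inj' hSc']
  linear_combination (-4 * Complex.I^2 * (r:ℂ)^3 * Complex.cosh ((r:ℂ) * (π:ℂ))) * hsqrt +
    (-4 * (r:ℂ)^3 * (π:ℂ) * Complex.cosh ((r:ℂ) * (π:ℂ))) * Complex.I_sq
end
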